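/- arXiv:1909.04089 — 2 statements merged into one kernel-verified Lean document; each statement's English description precedes it below -/
import Mathlib

section
/- The sextic form S_R vanishes at all thirteen points dual to the lines of the arrangement 𝒜¹_3(4): the coordinate point (1:0:0) and the twelve points (1:i^k:0), (1:0:i^k), (0:1:i^k) for k = 0,1,2,3. -/
/-- The unexpected sextic for `𝒜¹_3(4)`, as a function. -/
def sexticS (a b c x0 x1 x2 : ℂ) : ℂ :=
  a ^ 5 * (x1 * x2 * (x1 ^ 4 - x2 ^ 4)) +
  b ^ 5 * (x0 * x2 * (x2 ^ 4 - x0 ^ 4)) +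
  c ^ 5 * (x0 * x1 * (x0 ^ 4 - x1 ^ 4)) +
  10 * a ^ 3 * (x0 ^ 2 * x1 * x2) * (b ^ 2 * x1 ^ 2 - c ^ 2 * x2 ^ 2) +
  10 * b ^ 3 * (x0 * x1 ^ 2 * x2) * (c ^ 2 * x2 ^ 2 - a ^ 2 * x0 ^ 2) +
  10 * c ^ 3 * (x0 * x1 * x2 ^ 2) * (a ^ 2 * x0 ^ 2 - b ^ 2 * x1 ^ 2) +
  5 * a * (b ^ 4 - c ^ 4) * (x0 ^ 4 * x1 * x2) +
  5 * b * (c ^ 4 - a ^ 4) * (x0 * x1 ^ 4 * x2) +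
  5 * c * (a ^ 4 - b ^ 4) * (x0 * x1 * x2 ^ 4)

theorem sexticS_vanishes_at_thirteen_points (a b c : ℂ) :
    sexticS a b c 1 0 0 = 0 ∧
    ∀ k : ℕ, k < 4 →
      sexticS a b c 1 (Complex.I ^ k) 0 = 0 ∧
      sexticS a b c 1 0 (Complex.I ^ k) = 0 ∧
      sexticS a b c 0 1 (Complex.I ^ k) = 0 := by
  refine ⟨by simp [sexticS], fun k hk => ?_⟩
  interval_cases k <;>
    refine ⟨?_, ?_, ?_⟩ <;>
    simp [sexticS, pow_succ, Complex.I_sq]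
end

section
/- The quartic Q_R(x_0:x_1:x_2:x_3) = b²(c³−d³)x_0³x_1 + a²(d³−c³)x_0x_1³ + c²(d³−b³)x_0³x_2 + c²(a³−d³)x_1³x_2 + a²(b³−d³)x_0x_2³ + b²(d³−a³)x_1x_2³ + d²(b³−c³)x_0³x_3 + d²(c³−a³)x_1³x_3 + d²(a³−b³)x_2³x_3 + a²(c³−b³)x_0x_3³ + b²(a³−c³)x_1x_3³ + c²(b³−a³)x_2x_3³ vanishes to order 3 at the point R = (a:b:c:d), i.e., Q_R and all its partial derivatives of order ≤ 2 vanish at (a,b,c,d). -/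
open MvPolynomial

/-- Iterated partial derivative with respect to a multi-index `k`, four variables. -/
noncomputable def pderivMulti (k : Fin 4 → ℕ)
    (f : MvPolynomial (Fin 4) ℂ) : MvPolynomial (Fin 4) ℂ :=
  (fun g => pderiv 0 g)^[k 0] ((fun g => pderiv 1 g)^[k 1]
    ((fun g => pderiv 2 g)^[k 2] ((fun g => pderiv 3 g)^[k 3] f)))

/-- The unexpected quartic surface in `ℙ³`. -/
noncomputable def quarticQR (a b c d : ℂ) : MvPolynomial (Fin 4) ℂ :=
  C (b ^ 2 * (c ^ 3 - d ^ 3)) * (X 0 ^ 3 * X 1) +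
  C (a ^ 2 * (d ^ 3 - c ^ 3)) * (X 0 * X 1 ^ 3) +
  C (c ^ 2 * (d ^ 3 - b ^ 3)) * (X 0 ^ 3 * X 2) +
  C (c ^ 2 * (a ^ 3 - d ^ 3)) * (X 1 ^ 3 * X 2) +
  C (a ^ 2 * (b ^ 3 - d ^ 3)) * (X 0 * X 2 ^ 3) +
  C (b ^ 2 * (d ^ 3 - a ^ 3)) * (X 1 * X 2 ^ 3) +
  C (d ^ 2 * (b ^ 3 - c ^ 3)) * (X 0 ^ 3 * X 3) +
  C (d ^ 2 * (c ^ 3 - a ^ 3)) * (X 1 ^ 3 * X 3) +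
  C (d ^ 2 * (a ^ 3 - b ^ 3)) * (X 2 ^ 3 * X 3) +
  C (a ^ 2 * (c ^ 3 - b ^ 3)) * (X 0 * X 3 ^ 3) +
  C (b ^ 2 * (a ^ 3 - c ^ 3)) * (X 1 * X 3 ^ 3) +
  C (c ^ 2 * (b ^ 3 - a ^ 3)) * (X 2 * X 3 ^ 3)


lemma it0 (f : MvPolynomial (Fin 4) ℂ → MvPolynomial (Fin 4) ℂ) (x) : f^[0] x = x := rfl
lemma it1 (f : MvPolynomial (Fin 4) ℂ → MvPolynomial (Fin 4) ℂ) (x) : f^[1] x = f x := rfl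
lemma it2 (f : MvPolynomial (Fin 4) ℂ → MvPolynomial (Fin 4) ℂ) (x) : f^[2] x = f (f x) := rfl

lemma qv00 (a b c d : ℂ) :
    MvPolynomial.eval ![a, b, c, d] (pderiv 0 (pderiv 0 (quarticQR a b c d))) = 0 := by
  simp [quarticQR, pderiv_mul] <;> ring

lemma qv01 (a b c d : ℂ) :
    MvPolynomial.eval ![a, b, c, d] (pderiv 0 (pderiv 1 (quarticQR a b c d))) = 0 := by
  simp [quarticQR, pderiv_mul] <;> ring

lemma qv02 (a b c d : ℂ) :
    MvPolynomial.eval ![a, b, c, d] (pderiv 0 (pderiv 2 (quarticQR a b c d))) = 0 := by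
  simp [quarticQR, pderiv_mul] <;> ring

lemma qv03 (a b c d : ℂ) :
    MvPolynomial.eval ![a, b, c, d] (pderiv 0 (pderiv 3 (quarticQR a b c d))) = 0 := by
  simp [quarticQR, pderiv_mul] <;> ring

lemma qv11 (a b c d : ℂ) :
    MvPolynomial.eval ![a, b, c, d] (pderiv 1 (pderiv 1 (quarticQR a b c d))) = 0 := by
  simp [quarticQR, pderiv_mul] <;> ring

lemma qv12 (a b c d : ℂ) :
    MvPolynomial.eval ![a, b, c, d] (pderiv 1 (pderiv 2 (quarticQR a b c d))) = 0 := by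
  simp [quarticQR, pderiv_mul] <;> ring

lemma qv13 (a b c d : ℂ) :
    MvPolynomial.eval ![a, b, c, d] (pderiv 1 (pderiv 3 (quarticQR a b c d))) = 0 := by
  simp [quarticQR, pderiv_mul] <;> ring

lemma qv22 (a b c d : ℂ) :
    MvPolynomial.eval ![a, b, c, d] (pderiv 2 (pderiv 2 (quarticQR a b c d))) = 0 := by
  simp [quarticQR, pderiv_mul] <;> ring

lemma qv23 (a b c d : ℂ) :
    MvPolynomial.eval ![a, b, c, d] (pderiv 2 (pderiv 3 (quarticQR a b c d))) = 0 := by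
  simp [quarticQR, pderiv_mul] <;> ring

lemma qv33 (a b c d : ℂ) :
    MvPolynomial.eval ![a, b, c, d] (pderiv 3 (pderiv 3 (quarticQR a b c d))) = 0 := by
  simp [quarticQR, pderiv_mul] <;> ring

lemma qv0 (a b c d : ℂ) :
    MvPolynomial.eval ![a, b, c, d] (pderiv 0 (quarticQR a b c d)) = 0 := by
  simp [quarticQR, pderiv_mul] <;> ring

lemma qv1 (a b c d : ℂ) :
    MvPolynomial.eval ![a, b, c, d] (pderiv 1 (quarticQR a b c d)) = 0 := by
  simp [quarticQR, pderiv_mul] <;> ring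

lemma qv2 (a b c d : ℂ) :
    MvPolynomial.eval ![a, b, c, d] (pderiv 2 (quarticQR a b c d)) = 0 := by
  simp [quarticQR, pderiv_mul] <;> ring

lemma qv3 (a b c d : ℂ) :
    MvPolynomial.eval ![a, b, c, d] (pderiv 3 (quarticQR a b c d)) = 0 := by
  simp [quarticQR, pderiv_mul] <;> ring

lemma qv (a b c d : ℂ) :
    MvPolynomial.eval ![a, b, c, d] (quarticQR a b c d) = 0 := by
  simp [quarticQR] <;> ring

set_option maxHeartbeats 2000000 in
theorem quarticQR_vanishes_to_order_three (a b c d : ℂ) (k : Fin 4 → ℕ)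
    (hk : (∑ i, k i) ≤ 2) :
    MvPolynomial.eval ![a, b, c, d] (pderivMulti k (quarticQR a b c d)) = 0 := by
  rw [Fin.sum_univ_four] at hk
  unfold pderivMulti
  generalize k 0 = n0 at hk ⊢
  generalize k 1 = n1 at hk ⊢
  generalize k 2 = n2 at hk ⊢
  generalize k 3 = n3 at hk ⊢
  have h0 : n0 ≤ 2 := by omega
  have h1 : n1 ≤ 2 := by omega
  have h2 : n2 ≤ 2 := by omega
  have h3 : n3 ≤ 2 := by omega
  interval_cases n0 <;> interval_cases n1 <;> interval_cases n2 <;> interval_cases n3 <;>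
    simp only [it0, it1, it2] <;> try exact absurd hk (by omega)
  · exact qv a b c d
  · exact qv3 a b c d
  · exact qv33 a b c d
  · exact qv2 a b c d
  · exact qv23 a b c d
  · exact qv22 a b c d
  · exact qv1 a b c d
  · exact qv13 a b c d
  · exact qv12 a b c d
  · exact qv11 a b c d
  · exact qv0 a b c d
  · exact qv03 a b c d
  · exact qv02 a b c d
  · exact qv01 a b c d
  · exact qv00 a b c d
end
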